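/- arXiv:math/0106159 — 2 statements merged into one kernel-verified Lean document; each statement's English description precedes it below -/
import Mathlib

section
/- In the setting of the paper's confidence interval construction (Proposition 1): with Ā̃ the truncated sample average, ḡ the true mean, N_n the number of truncations, h(z,n;α) = z/n + (2α)^{-1/2}/√n for z ≠ 0 and h(0,n;α) = (log(2/α))/n, and r = min(n, m/τ̂), one has for every b > 0: P(|Ā̃ - ḡ| > b·(log n)/√(rn) + h(N_n, n; α)) ≤ 1/b² + α. -/
open MeasureTheory ProbabilityTheory Finset


private lemma aux_sum_prod {V : Type*} [Fintype V] (q : V → ℝ) (n : ℕ) :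
    ∑ cx : Fin n → V, ∏ i, q (cx i) = (∑ v, q v) ^ n :=
  (Fintype.sum_pow q n).symm

private lemma aux_cheb {X : Type*} [Fintype X] (w f : X → ℝ) (hw : ∀ x, 0 ≤ w x)
    (P : X → Prop) [DecidablePred P] (t : ℝ) (ht : 0 < t)
    (hP : ∀ x, P x → t ≤ |f x|) :
    ∑ x, w x * (if P x then (1:ℝ) else 0) ≤ (∑ x, w x * f x ^ 2) / t ^ 2 := by
  have hstep : ∀ x, w x * (if P x then (1:ℝ) else 0) ≤ w x * (f x ^ 2 / t ^ 2) := by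
    intro x
    by_cases hx : P x
    · simp only [hx, if_true, mul_one]
      have h1 : t ^ 2 ≤ f x ^ 2 := by
        have := hP x hx
        nlinarith [abs_nonneg (f x), sq_abs (f x)]
      have : (1:ℝ) ≤ f x ^ 2 / t ^ 2 := (one_le_div (by positivity)).2 h1
      nlinarith [hw x]
    · simp only [hx, if_false, mul_zero]
      exact mul_nonneg (hw x) (by positivity)
  calc ∑ x, w x * (if P x then (1:ℝ) else 0) ≤ ∑ x, w x * (f x ^ 2 / t ^ 2) :=
        Finset.sum_le_sum fun x _ => hstep x
    _ = (∑ x, w x * f x ^ 2) / t ^ 2 := by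
        rw [Finset.sum_div]
        exact Finset.sum_congr rfl fun x _ => by ring

private lemma aux_var_sum {V : Type*} [Fintype V] (q : V → ℝ) (hq1 : ∑ v, q v = 1)
    (d : V → ℝ) (hEd : ∑ v, q v * d v = 0) :
    ∀ n : ℕ, ∑ cx : Fin n → V, (∏ i, q (cx i)) * (∑ i, d (cx i)) ^ 2
      = n * ∑ v, q v * d v ^ 2
  | 0 => by simp
  | (n+1) => by
    have ih := aux_var_sum q hq1 d hEd n
    have e := (Fin.consEquiv (fun _ : Fin (n+1) => V))
    rw [← Equiv.sum_comp (Fin.consEquiv (fun _ : Fin (n+1) => V))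
      (fun cx => (∏ i, q (cx i)) * (∑ i, d (cx i)) ^ 2), Fintype.sum_prod_type]
    have hterm : ∀ (v : V) (w : Fin n → V),
        (∏ i, q ((Fin.consEquiv (fun _ : Fin (n+1) => V)) (v, w) i)) *
          (∑ i, d ((Fin.consEquiv (fun _ : Fin (n+1) => V)) (v, w) i)) ^ 2
        = (q v * ∏ i, q (w i)) * (d v + ∑ i, d (w i)) ^ 2 := by
      intro v w
      have h1 : ((Fin.consEquiv (fun _ : Fin (n+1) => V)) (v, w)) = Fin.cons v w := rfl
      rw [h1]
      simp only [ Fin.prod_univ_succ, Fin.sum_univ_succ, Fin.cons_zero, Fin.cons_succ]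
    calc ∑ v : V, ∑ w : Fin n → V,
          (∏ i, q ((Fin.consEquiv (fun _ : Fin (n+1) => V)) (v, w) i)) *
            (∑ i, d ((Fin.consEquiv (fun _ : Fin (n+1) => V)) (v, w) i)) ^ 2
        = ∑ v : V, ∑ w : Fin n → V,
            ((q v * d v ^ 2) * (∏ i, q (w i))
              + (2 * (q v * d v)) * ((∏ i, q (w i)) * (∑ i, d (w i)))
              + q v * ((∏ i, q (w i)) * (∑ i, d (w i)) ^ 2)) := by
          refine Finset.sum_congr rfl fun v _ => Finset.sum_congr rfl fun w _ => ?_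
          rw [hterm v w]; ring
      _ = (∑ v, q v * d v ^ 2) * (∑ w : Fin n → V, ∏ i, q (w i))
            + 2 * (∑ v, q v * d v) * (∑ w : Fin n → V, (∏ i, q (w i)) * (∑ i, d (w i)))
            + (∑ v, q v) * (∑ w : Fin n → V, (∏ i, q (w i)) * (∑ i, d (w i)) ^ 2) := by
          simp only [Finset.sum_add_distrib, ← Finset.sum_mul, ← Finset.mul_sum]
      _ = (n+1 : ℕ) * ∑ v, q v * d v ^ 2 := by
          rw [aux_sum_prod, hq1, one_pow, hEd, ih]
          push_cast; ring


private lemma aux_cons_prod {S : Type*} (K : S → S → ℝ) (M : ℕ) (s : S)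
    (w : Fin (M+1) → S) :
    (∏ j : Fin (M+1), K ((Fin.cons s w : Fin (M+2) → S) j.castSucc)
        ((Fin.cons s w : Fin (M+2) → S) j.succ))
      = K s (w 0) * ∏ j : Fin M, K (w j.castSucc) (w j.succ) := by
  rw [Fin.prod_univ_succ]
  simp only [Fin.castSucc_zero, Fin.cons_zero, ← Fin.succ_castSucc, Fin.cons_succ]

private lemma aux_chain_mass {S : Type*} [Fintype S] (K : S → S → ℝ)
    (hKrow : ∀ s, ∑ t, K s t = 1) :
    ∀ (M : ℕ) (ρ : S → ℝ),
      ∑ v : Fin (M+1) → S, ρ (v 0) * ∏ j : Fin M, K (v j.castSucc) (v j.succ)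
        = ∑ s, ρ s
  | 0, ρ => by
    rw [← Equiv.sum_comp (Equiv.funUnique (Fin 1) S).symm
      (fun v : Fin 1 → S => ρ (v 0) * ∏ j : Fin 0, K (v j.castSucc) (v j.succ))]
    simp [Equiv.funUnique]
  | (M+1), ρ => by
    rw [← Equiv.sum_comp (Fin.consEquiv (fun _ : Fin (M+2) => S))
      (fun v : Fin (M+2) → S => ρ (v 0) * ∏ j : Fin (M+1), K (v j.castSucc) (v j.succ)),
      Fintype.sum_prod_type]
    have hterm : ∀ (s : S) (w : Fin (M+1) → S),
        ρ ((Fin.consEquiv (fun _ : Fin (M+2) => S)) (s, w) 0) *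
          ∏ j : Fin (M+1), K ((Fin.consEquiv (fun _ : Fin (M+2) => S)) (s, w) j.castSucc)
            ((Fin.consEquiv (fun _ : Fin (M+2) => S)) (s, w) j.succ)
        = ρ s * (K s (w 0) * ∏ j : Fin M, K (w j.castSucc) (w j.succ)) := by
      intro s w
      have h1 : ((Fin.consEquiv (fun _ : Fin (M+2) => S)) (s, w))
          = (Fin.cons s w : Fin (M+2) → S) := rfl
      rw [h1, aux_cons_prod, Fin.cons_zero]
    calc ∑ s : S, ∑ w : Fin (M+1) → S,
          ρ ((Fin.consEquiv (fun _ : Fin (M+2) => S)) (s, w) 0) *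
            ∏ j : Fin (M+1), K ((Fin.consEquiv (fun _ : Fin (M+2) => S)) (s, w) j.castSucc)
              ((Fin.consEquiv (fun _ : Fin (M+2) => S)) (s, w) j.succ)
        = ∑ s : S, ρ s * ∑ w : Fin (M+1) → S,
            K s (w 0) * ∏ j : Fin M, K (w j.castSucc) (w j.succ) := by
          refine Finset.sum_congr rfl fun s _ => ?_
          rw [Finset.mul_sum]
          exact Finset.sum_congr rfl fun w _ => hterm s w
      _ = ∑ s : S, ρ s * 1 := by
          refine Finset.sum_congr rfl fun s _ => ?_
          rw [aux_chain_mass K hKrow M (fun t => K s t), hKrow s]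
      _ = ∑ s, ρ s := by simp

private lemma aux_chain_marg {S : Type*} [Fintype S] (K : S → S → ℝ) (π : S → ℝ)
    (hKrow : ∀ s, ∑ t, K s t = 1) (hstat : ∀ t, ∑ s, π s * K s t = π t) (u : S → ℝ) :
    ∀ (M : ℕ) (j : Fin (M+1)),
      ∑ v : Fin (M+1) → S,
          (π (v 0) * ∏ j' : Fin M, K (v j'.castSucc) (v j'.succ)) * u (v j)
        = ∑ s, π s * u s
  | 0, j => by
    have hj : j = 0 := Fin.ext (by omega)
    subst hj
    rw [← Equiv.sum_comp (Equiv.funUnique (Fin 1) S).symm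
      (fun v : Fin 1 → S => (π (v 0) * ∏ j' : Fin 0, K (v j'.castSucc) (v j'.succ)) * u (v 0))]
    simp [Equiv.funUnique]
  | (M+1), j => by
    rw [← Equiv.sum_comp (Fin.consEquiv (fun _ : Fin (M+2) => S))
      (fun v : Fin (M+2) → S =>
        (π (v 0) * ∏ j' : Fin (M+1), K (v j'.castSucc) (v j'.succ)) * u (v j)),
      Fintype.sum_prod_type]
    have hcons : ∀ (s : S) (w : Fin (M+1) → S),
        ((Fin.consEquiv (fun _ : Fin (M+2) => S)) (s, w))
          = (Fin.cons s w : Fin (M+2) → S) := fun _ _ => rfl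
    induction j using Fin.cases with
    | zero =>
      calc ∑ s : S, ∑ w : Fin (M+1) → S,
            (π ((Fin.consEquiv (fun _ : Fin (M+2) => S)) (s, w) 0) *
              ∏ j' : Fin (M+1), K ((Fin.consEquiv (fun _ : Fin (M+2) => S)) (s, w) j'.castSucc)
                ((Fin.consEquiv (fun _ : Fin (M+2) => S)) (s, w) j'.succ)) *
              u ((Fin.consEquiv (fun _ : Fin (M+2) => S)) (s, w) 0)
          = ∑ s : S, (π s * u s) * ∑ w : Fin (M+1) → S,
              K s (w 0) * ∏ j' : Fin M, K (w j'.castSucc) (w j'.succ) := by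
            refine Finset.sum_congr rfl fun s _ => ?_
            rw [Finset.mul_sum]
            refine Finset.sum_congr rfl fun w _ => ?_
            rw [hcons, aux_cons_prod, Fin.cons_zero]
            ring
        _ = ∑ s, π s * u s := by
            rw [show (∑ s : S, (π s * u s) * ∑ w : Fin (M+1) → S,
                K s (w 0) * ∏ j' : Fin M, K (w j'.castSucc) (w j'.succ))
              = ∑ s : S, (π s * u s) * 1 from Finset.sum_congr rfl fun s _ => by
                rw [aux_chain_mass K hKrow M (fun t => K s t), hKrow s]]
            simp
    | succ j' =>
      calc ∑ s : S, ∑ w : Fin (M+1) → S,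
            (π ((Fin.consEquiv (fun _ : Fin (M+2) => S)) (s, w) 0) *
              ∏ j'' : Fin (M+1), K ((Fin.consEquiv (fun _ : Fin (M+2) => S)) (s, w) j''.castSucc)
                ((Fin.consEquiv (fun _ : Fin (M+2) => S)) (s, w) j''.succ)) *
              u ((Fin.consEquiv (fun _ : Fin (M+2) => S)) (s, w) j'.succ)
          = ∑ w : Fin (M+1) → S, ∑ s : S,
              (π s * K s (w 0)) *
                ((∏ j'' : Fin M, K (w j''.castSucc) (w j''.succ)) * u (w j')) := by
            rw [Finset.sum_comm]
            refine Finset.sum_congr rfl fun w _ => Finset.sum_congr rfl fun s _ => ?_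
            rw [hcons, aux_cons_prod, Fin.cons_zero, Fin.cons_succ]
            ring
        _ = ∑ w : Fin (M+1) → S,
              (π (w 0) * ∏ j'' : Fin M, K (w j''.castSucc) (w j''.succ)) * u (w j') := by
            refine Finset.sum_congr rfl fun w _ => ?_
            rw [← Finset.sum_mul, hstat (w 0)]
            ring
        _ = ∑ s, π s * u s := aux_chain_marg K π hKrow hstat u M j'


private lemma aux_ind_nonneg (P : Prop) [Decidable P] : (0:ℝ) ≤ if P then (1:ℝ) else 0 := by
  split <;> norm_num

set_option maxHeartbeats 3200000 in
private lemma aux_core {V : Type*} [Fintype V]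
    (q : V → ℝ) (hq0 : ∀ v, 0 ≤ q v) (hq1 : ∑ v, q v = 1)
    (a : V → ℝ) (ha : ∀ v, a v ∈ Set.Icc (0:ℝ) 1)
    (gb : ℝ) (hEa : ∑ v, q v * a v = gb)
    (n : ℕ) (hn : 1 ≤ n) (L c : ℝ) (hL : 0 < L) (hc : c ∈ Set.Icc (0:ℝ) 1)
    (b α : ℝ) (hb : 0 < b) (hα0 : 0 < α) (hα1 : α < 1)
    (H : ℕ → ℝ)
    (hH : ∀ z : ℕ, H z = if z = 0 then Real.log (2 / α) / n
      else z / n + 1 / Real.sqrt (2 * α * n)) :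
    ∑ cx : Fin n → V, (∏ i, q (cx i)) *
      (if b * L / Real.sqrt n + H (univ.filter fun i => ¬ |a (cx i) - c| ≤ L).card
          < |(∑ i, (if |a (cx i) - c| ≤ L then a (cx i) else c)) / n - gb|
        then (1:ℝ) else 0)
    ≤ 1 / b ^ 2 + α := by
  classical
  have hn0 : (0:ℝ) < n := by exact_mod_cast hn
  set Y : V → ℝ := fun v => if |a v - c| ≤ L then a v else c with hY
  set M : ℝ := ∑ v, q v * Y v with hM
  set χ : V → ℝ := fun v => if |a v - c| ≤ L then 0 else 1 with hχ
  set p : ℝ := ∑ v, q v * χ v with hp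
  have hYc : ∀ v, |Y v - c| ≤ L := by
    intro v
    by_cases hv : |a v - c| ≤ L <;> simp [hY, hv, hL.le, abs_nonneg]
  have hχ01 : ∀ v, 0 ≤ χ v ∧ χ v ≤ 1 := by
    intro v; by_cases hv : |a v - c| ≤ L <;> simp [hχ, hv]
  have hp0 : 0 ≤ p := Finset.sum_nonneg fun v _ => mul_nonneg (hq0 v) (hχ01 v).1
  have hp1 : p ≤ 1 := by
    calc p ≤ ∑ v, q v * 1 := Finset.sum_le_sum fun v _ =>
          mul_le_mul_of_nonneg_left (hχ01 v).2 (hq0 v)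
      _ = 1 := by simp [hq1]
  have hbias : |M - gb| ≤ p := by
    have h1 : M - gb = ∑ v, q v * (Y v - a v) := by
      rw [hM, ← hEa, ← Finset.sum_sub_distrib]
      exact Finset.sum_congr rfl fun v _ => by ring
    have h2 : ∀ v, |q v * (Y v - a v)| ≤ q v * χ v := by
      intro v
      rw [abs_mul, abs_of_nonneg (hq0 v)]
      refine mul_le_mul_of_nonneg_left ?_ (hq0 v)
      by_cases hv : |a v - c| ≤ L
      · simp [hY, hχ, hv]
      · simp only [hY, hχ, hv, if_false]
        have h3 := (ha v).1; have h4 := (ha v).2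
        have h5 := hc.1; have h6 := hc.2
        rw [abs_le]; constructor <;> nlinarith
    calc |M - gb| = |∑ v, q v * (Y v - a v)| := by rw [h1]
      _ ≤ ∑ v, |q v * (Y v - a v)| := Finset.abs_sum_le_sum_abs _ _
      _ ≤ ∑ v, q v * χ v := Finset.sum_le_sum fun v _ => h2 v
      _ = p := rfl
  have hEY : ∑ v, q v * (Y v - M) = 0 := by
    rw [show (∑ v, q v * (Y v - M)) = (∑ v, q v * Y v) - M * ∑ v, q v by
      rw [Finset.mul_sum, ← Finset.sum_sub_distrib]
      exact Finset.sum_congr rfl fun v _ => by ring]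
    rw [hq1, ← hM]; ring
  have hvarY : ∑ v, q v * (Y v - M) ^ 2 ≤ L ^ 2 := by
    have e2 : ∑ v, q v * (Y v - c) = M - c := by
      rw [show (∑ v, q v * (Y v - c)) = (∑ v, q v * Y v) - c * ∑ v, q v by
        rw [Finset.mul_sum, ← Finset.sum_sub_distrib]
        exact Finset.sum_congr rfl fun v _ => by ring]
      rw [hq1, ← hM]; ring
    have h1 : ∑ v, q v * (Y v - M) ^ 2 = (∑ v, q v * (Y v - c) ^ 2) - (M - c) ^ 2 := by
      have e1 : ∀ v ∈ univ, q v * (Y v - M) ^ 2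
          = q v * (Y v - c) ^ 2 - (2 * (M - c)) * (q v * (Y v - c)) + (M - c) ^ 2 * q v :=
        fun v _ => by ring
      rw [Finset.sum_congr rfl e1, Finset.sum_add_distrib, Finset.sum_sub_distrib,
        ← Finset.mul_sum, ← Finset.mul_sum, hq1, e2]
      ring
    have h2 : ∑ v, q v * (Y v - c) ^ 2 ≤ L ^ 2 := by
      calc ∑ v, q v * (Y v - c) ^ 2 ≤ ∑ v, q v * L ^ 2 := by
            refine Finset.sum_le_sum fun v _ => mul_le_mul_of_nonneg_left ?_ (hq0 v)
            have := hYc v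
            nlinarith [abs_nonneg (Y v - c), sq_abs (Y v - c)]
        _ = L ^ 2 := by rw [← Finset.sum_mul, hq1, one_mul]
    rw [h1]; nlinarith [sq_nonneg (M - c)]
  have hEχ : ∑ v, q v * (χ v - p) = 0 := by
    rw [show (∑ v, q v * (χ v - p)) = (∑ v, q v * χ v) - p * ∑ v, q v by
      rw [Finset.mul_sum, ← Finset.sum_sub_distrib]
      exact Finset.sum_congr rfl fun v _ => by ring]
    rw [hq1, ← hp]; ring
  have hvarχ : ∑ v, q v * (χ v - p) ^ 2 ≤ 1 / 4 := by
    have h1 : ∑ v, q v * (χ v - p) ^ 2 = p - p ^ 2 := by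
      have e1 : ∀ v ∈ univ, q v * (χ v - p) ^ 2
          = (q v * χ v) * (1 - 2 * p) + p ^ 2 * q v := by
        intro v _
        by_cases hv : |a v - c| ≤ L <;> simp only [hχ, hv, if_true, if_false] <;> ring
      rw [Finset.sum_congr rfl e1, Finset.sum_add_distrib, ← Finset.sum_mul,
        ← Finset.mul_sum, hq1, ← hp]
      ring
    rw [h1]; nlinarith [sq_nonneg (p - 1/2)]
  -- events
  set W : (Fin n → V) → ℝ := fun cx => ∏ i, q (cx i) with hW
  have hW0 : ∀ cx, 0 ≤ W cx := fun cx => Finset.prod_nonneg fun i _ => hq0 _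
  set Ncard : (Fin n → V) → ℕ :=
    fun cx => (univ.filter fun i => ¬ |a (cx i) - c| ≤ L).card with hNcard
  set t2 : ℝ := 1 / Real.sqrt (2 * α * n) with ht2
  have ht2pos : 0 < t2 := by rw [ht2]; positivity
  set E1 : (Fin n → V) → Prop := fun cx =>
    b * L / Real.sqrt n < |(∑ i, Y (cx i)) / n - M| with hE1
  set E2 : (Fin n → V) → Prop :=
    fun cx => Ncard cx = 0 ∧ Real.log (2 / α) / n < p with hE2
  set E3 : (Fin n → V) → Prop := fun cx => t2 ≤ |(Ncard cx : ℝ) / n - p| with hE3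
  have hsqrtn : (0:ℝ) < Real.sqrt n := Real.sqrt_pos.2 hn0
  have ht1pos : 0 < b * L / Real.sqrt n := by positivity
  have hdecomp : ∀ cx : Fin n → V,
      (if b * L / Real.sqrt n + H (univ.filter fun i => ¬ |a (cx i) - c| ≤ L).card
          < |(∑ i, (if |a (cx i) - c| ≤ L then a (cx i) else c)) / n - gb|
        then (1:ℝ) else 0)
      ≤ (if E1 cx then (1:ℝ) else 0) + (if E2 cx then (1:ℝ) else 0)
        + (if E3 cx then (1:ℝ) else 0) := by
    intro cx
    have h1 := aux_ind_nonneg (E1 cx); have h2 := aux_ind_nonneg (E2 cx)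
    have h3 := aux_ind_nonneg (E3 cx)
    by_cases hP : b * L / Real.sqrt n + H (univ.filter fun i => ¬ |a (cx i) - c| ≤ L).card
        < |(∑ i, (if |a (cx i) - c| ≤ L then a (cx i) else c)) / n - gb|
    swap
    · rw [if_neg hP]; linarith
    · by_cases he1 : E1 cx
      · rw [if_pos hP, if_pos he1]; linarith
      by_cases he3 : E3 cx
      · rw [if_pos hP, if_pos he3]; linarith
      have hE2holds : E2 cx := by
        have hAbar : (∑ i, (if |a (cx i) - c| ≤ L then a (cx i) else c)) / n
            = (∑ i, Y (cx i)) / n := rfl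
        have hne1 : |(∑ i, Y (cx i)) / n - M| ≤ b * L / Real.sqrt n := le_of_not_gt he1
        have hne3 : |(Ncard cx : ℝ) / n - p| < t2 := lt_of_not_ge he3
        have htri : |(∑ i, Y (cx i)) / n - gb|
            ≤ |(∑ i, Y (cx i)) / n - M| + |M - gb| := abs_sub_le _ _ _
        have hub : |(∑ i, Y (cx i)) / n - gb| ≤ b * L / Real.sqrt n + p := by linarith
        rw [hAbar] at hP
        have heq : H ((univ.filter fun i => ¬ |a (cx i) - c| ≤ L).card)
            = H (Ncard cx) := rfl
        rw [heq] at hP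
        by_cases hN0 : Ncard cx = 0
        · refine ⟨hN0, ?_⟩
          by_contra hple
          push_neg at hple
          rw [hH, if_pos hN0] at hP
          linarith
        · exfalso
          rw [hH, if_neg hN0] at hP
          have hple : p ≤ (Ncard cx : ℝ) / n + t2 := by
            have := abs_lt.1 hne3
            linarith [this.1]
          linarith
      rw [if_pos hP, if_pos hE2holds]; linarith
  -- S1 bound
  have hS1 : ∑ cx : Fin n → V, W cx * (if E1 cx then (1:ℝ) else 0) ≤ 1 / b ^ 2 := by
    have hc1 := aux_cheb W (fun cx => (∑ i, Y (cx i)) / n - M) hW0 E1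
      (b * L / Real.sqrt n) ht1pos (fun cx hcx => le_of_lt hcx)
    refine hc1.trans ?_
    have hvs : ∑ cx : Fin n → V, W cx * ((∑ i, Y (cx i)) / n - M) ^ 2
        = ((n:ℝ) * ∑ v, q v * (Y v - M) ^ 2) / (n:ℝ) ^ 2 := by
      rw [← aux_var_sum q hq1 (fun v => Y v - M) hEY n, Finset.sum_div]
      refine Finset.sum_congr rfl fun cx _ => ?_
      have he : (∑ i, Y (cx i)) / n - M = (∑ i, (Y (cx i) - M)) / n := by
        rw [Finset.sum_sub_distrib]
        simp only [Finset.sum_const, Finset.card_univ, Fintype.card_fin, nsmul_eq_mul]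
        field_simp
      rw [he, div_pow]
      field_simp
      try ring
    rw [hvs]
    have hVY0 : 0 ≤ ∑ v, q v * (Y v - M) ^ 2 :=
      Finset.sum_nonneg fun v _ => mul_nonneg (hq0 v) (sq_nonneg _)
    have hEq : ((n:ℝ) * ∑ v, q v * (Y v - M) ^ 2) / (n:ℝ) ^ 2 / (b * L / Real.sqrt n) ^ 2
        = (∑ v, q v * (Y v - M) ^ 2) / (b ^ 2 * L ^ 2) := by
      rw [div_pow, mul_pow, Real.sq_sqrt hn0.le]
      field_simp
      try ring
    rw [hEq]
    calc (∑ v, q v * (Y v - M) ^ 2) / (b ^ 2 * L ^ 2) ≤ L ^ 2 / (b ^ 2 * L ^ 2) := by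
          gcongr
      _ = 1 / b ^ 2 := by
          field_simp
          try ring
  -- S2 bound
  have hS2 : ∑ cx : Fin n → V, W cx * (if E2 cx then (1:ℝ) else 0) ≤ α / 2 := by
    by_cases hplog : Real.log (2 / α) / n < p
    · have hterm : ∀ cx : Fin n → V,
          W cx * (if E2 cx then (1:ℝ) else 0) = ∏ i, (q (cx i) * (1 - χ (cx i))) := by
        intro cx
        by_cases h0 : Ncard cx = 0
        · have hgood : ∀ i, |a (cx i) - c| ≤ L := by
            intro i
            by_contra hbad
            have hmem : i ∈ univ.filter fun i => ¬ |a (cx i) - c| ≤ L :=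
              Finset.mem_filter.2 ⟨Finset.mem_univ i, hbad⟩
            have hpos : 0 < Ncard cx := Finset.card_pos.2 ⟨i, hmem⟩
            omega
          rw [if_pos ⟨h0, hplog⟩, mul_one]
          exact Finset.prod_congr rfl fun i _ => by simp [hχ, hgood i]
        · have hbad : ∃ i, ¬ |a (cx i) - c| ≤ L := by
            by_contra hall
            push_neg at hall
            have : (univ.filter fun i => ¬ |a (cx i) - c| ≤ L) = ∅ := by
              refine Finset.filter_eq_empty_iff.2 fun i _ => ?_
              simp [hall i]
            have : Ncard cx = 0 := by
              show (univ.filter fun i => ¬ |a (cx i) - c| ≤ L).card = 0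
              rw [this]; rfl
            exact h0 this
          obtain ⟨i, hi⟩ := hbad
          rw [if_neg (fun hE : E2 cx => h0 hE.1), mul_zero]
          symm
          apply Finset.prod_eq_zero (Finset.mem_univ i)
          simp [hχ, hi]
      have hqχ : ∑ v, q v * (1 - χ v) = 1 - p := by
        rw [show (∑ v, q v * (1 - χ v)) = (∑ v, q v) - ∑ v, q v * χ v by
          rw [← Finset.sum_sub_distrib]
          exact Finset.sum_congr rfl fun v _ => by ring]
        rw [hq1, ← hp]
      have h1p0 : (0:ℝ) ≤ 1 - p := by linarith
      have hpexp : (1:ℝ) - p ≤ Real.exp (-p) := by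
        nlinarith [Real.add_one_le_exp (-p)]
      calc ∑ cx : Fin n → V, W cx * (if E2 cx then (1:ℝ) else 0)
          = ∑ cx : Fin n → V, ∏ i, (q (cx i) * (1 - χ (cx i))) :=
            Finset.sum_congr rfl fun cx _ => hterm cx
        _ = (∑ v, q v * (1 - χ v)) ^ n := aux_sum_prod (fun v => q v * (1 - χ v)) n
        _ = (1 - p) ^ n := by rw [hqχ]
        _ ≤ Real.exp (-p) ^ n := pow_le_pow_left₀ h1p0 hpexp n
        _ = Real.exp ((n:ℝ) * (-p)) := (Real.exp_nat_mul _ n).symm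
        _ ≤ Real.exp (-Real.log (2 / α)) := by
            apply Real.exp_le_exp.2
            have := (div_lt_iff₀ hn0).1 hplog
            nlinarith
        _ = α / 2 := by
            rw [Real.exp_neg, Real.exp_log (by positivity : (0:ℝ) < 2 / α)]
            rw [inv_div]
    · have hzero : ∀ cx : Fin n → V, (if E2 cx then (1:ℝ) else 0) = 0 :=
        fun cx => if_neg fun hE : E2 cx => hplog hE.2
      calc ∑ cx : Fin n → V, W cx * (if E2 cx then (1:ℝ) else 0)
          = 0 := by
            refine Finset.sum_eq_zero fun cx _ => ?_
            rw [hzero cx, mul_zero]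
        _ ≤ α / 2 := by positivity
  -- S3 bound
  have hS3 : ∑ cx : Fin n → V, W cx * (if E3 cx then (1:ℝ) else 0) ≤ α / 2 := by
    have hc3 := aux_cheb W (fun cx => (Ncard cx : ℝ) / n - p) hW0 E3 t2 ht2pos
      (fun cx hcx => hcx)
    refine hc3.trans ?_
    have hNsum : ∀ cx : Fin n → V, (Ncard cx : ℝ) = ∑ i, χ (cx i) := by
      intro cx
      have h1 : Ncard cx = (univ.filter fun i => ¬ |a (cx i) - c| ≤ L).card := rfl
      rw [h1, Finset.card_filter]
      push_cast
      refine Finset.sum_congr rfl fun i _ => ?_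
      by_cases hi : |a (cx i) - c| ≤ L <;> simp [hχ, hi]
    have hvs : ∑ cx : Fin n → V, W cx * ((Ncard cx : ℝ) / n - p) ^ 2
        = ((n:ℝ) * ∑ v, q v * (χ v - p) ^ 2) / (n:ℝ) ^ 2 := by
      rw [← aux_var_sum q hq1 (fun v => χ v - p) hEχ n, Finset.sum_div]
      refine Finset.sum_congr rfl fun cx _ => ?_
      have he : (Ncard cx : ℝ) / n - p = (∑ i, (χ (cx i) - p)) / n := by
        rw [Finset.sum_sub_distrib, ← hNsum cx]
        simp only [Finset.sum_const, Finset.card_univ, Fintype.card_fin, nsmul_eq_mul]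
        field_simp
      rw [he, div_pow]
      field_simp
      try ring
    rw [hvs]
    have ht2sq : t2 ^ 2 = 1 / (2 * α * n) := by
      rw [ht2, div_pow, one_pow, Real.sq_sqrt (by positivity)]
    rw [ht2sq]
    have hVχ0 : 0 ≤ ∑ v, q v * (χ v - p) ^ 2 :=
      Finset.sum_nonneg fun v _ => mul_nonneg (hq0 v) (sq_nonneg _)
    have hEq : ((n:ℝ) * ∑ v, q v * (χ v - p) ^ 2) / (n:ℝ) ^ 2 / (1 / (2 * α * n))
        = (2 * α) * ∑ v, q v * (χ v - p) ^ 2 := by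
      field_simp
      try ring
    rw [hEq]
    nlinarith
  -- assemble
  calc ∑ cx : Fin n → V, (∏ i, q (cx i)) *
        (if b * L / Real.sqrt n + H (univ.filter fun i => ¬ |a (cx i) - c| ≤ L).card
            < |(∑ i, (if |a (cx i) - c| ≤ L then a (cx i) else c)) / n - gb|
          then (1:ℝ) else 0)
      ≤ ∑ cx : Fin n → V, W cx *
          ((if E1 cx then (1:ℝ) else 0) + (if E2 cx then (1:ℝ) else 0)
            + (if E3 cx then (1:ℝ) else 0)) := by
        refine Finset.sum_le_sum fun cx _ => ?_
        exact mul_le_mul_of_nonneg_left (hdecomp cx) (hW0 cx)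
    _ = (∑ cx : Fin n → V, W cx * (if E1 cx then (1:ℝ) else 0))
        + (∑ cx : Fin n → V, W cx * (if E2 cx then (1:ℝ) else 0))
        + (∑ cx : Fin n → V, W cx * (if E3 cx then (1:ℝ) else 0)) := by
        rw [← Finset.sum_add_distrib, ← Finset.sum_add_distrib]
        exact Finset.sum_congr rfl fun cx _ => by ring
    _ ≤ 1 / b ^ 2 + α / 2 + α / 2 := add_le_add (add_le_add hS1 hS2) hS3
    _ = 1 / b ^ 2 + α := by ring

set_option maxHeartbeats 4000000 in
/-- Proposition 1 of the paper.  `2n` independent `m`-step `K`-chains are started from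
exact `π`-samples (`Xs` the starred run, `X` the unstarred run); `Aᵢ*`, `Aᵢ` are the
time averages of `g` along the chains, `ḡ*` the overall starred average, `Ãᵢ` the
truncation of `Aᵢ` at `ḡ* ± (log n)/√r`, `Ā̃` their average and `N` the number of
truncations.  Then for every `b > 0`,
`P(|Ā̃ - ḡ| > b (log n)/√(rn) + h(N,n;α)) ≤ 1/b² + α`. -/
theorem proposition_one
    {S : Type*} [Fintype S] [MeasurableSpace S] [DiscreteMeasurableSpace S]
    (K : S → S → ℝ) (π : S → ℝ)
    (hKnonneg : ∀ s t, 0 ≤ K s t) (hKrow : ∀ s, ∑ t, K s t = 1)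
    (hπnonneg : ∀ s, 0 ≤ π s) (hπsum : ∑ s, π s = 1)
    (hrev : ∀ s t, π s * K s t = π t * K t s)
    (g : S → ℝ) (hg : ∀ s, g s ∈ Set.Icc (0 : ℝ) 1)
    (gbar : ℝ) (hgbar : gbar = ∑ s, π s * g s)
    (n m : ℕ) (hn : 3 ≤ n) (hm : 1 ≤ m)
    (τhat : ℝ) (hτhat : 1 ≤ τhat) (α : ℝ) (hα0 : 0 < α) (hα1 : α < 1)
    (r : ℝ) (hr : r = min (n : ℝ) (m / τhat))
    {Ω : Type*} [MeasureSpace Ω] [IsProbabilityMeasure (ℙ : Measure Ω)]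
    (Xs X : Fin n → ℕ → Ω → S)
    (hchain_s : ∀ i (f : ℕ → S),
      (ℙ : Measure Ω) {ω | ∀ j < m, Xs i j ω = f j}
        = ENNReal.ofReal (π (f 0) * ∏ j ∈ range (m - 1), K (f j) (f (j + 1))))
    (hchain : ∀ i (f : ℕ → S),
      (ℙ : Measure Ω) {ω | ∀ j < m, X i j ω = f j}
        = ENNReal.ofReal (π (f 0) * ∏ j ∈ range (m - 1), K (f j) (f (j + 1))))
    (hindep : iIndepFun
      (fun (k : Fin n ⊕ Fin n) (ω : Ω) =>
        Sum.elim (fun i j => Xs i j ω) (fun i j => X i j ω) k) ℙ)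
    (As A : Fin n → Ω → ℝ)
    (hAs : ∀ i ω, As i ω = (∑ j ∈ range m, g (Xs i j ω)) / m)
    (hA : ∀ i ω, A i ω = (∑ j ∈ range m, g (X i j ω)) / m)
    (gstar : Ω → ℝ) (hgstar : ∀ ω, gstar ω = (∑ i, As i ω) / n)
    (At : Fin n → Ω → ℝ)
    (hAt : ∀ i ω, At i ω =
      if |A i ω - gstar ω| ≤ Real.log n / Real.sqrt r then A i ω else gstar ω)
    (Abar : Ω → ℝ) (hAbar : ∀ ω, Abar ω = (∑ i, At i ω) / n)
    (N : Ω → ℕ)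
    (hN : ∀ ω, N ω = (univ.filter fun i => A i ω ≠ At i ω).card)
    (h : ℕ → ℕ → ℝ → ℝ)
    (hh : ∀ (z : ℕ) (α' : ℝ), h z n α' =
      if z = 0 then Real.log (2 / α') / n
      else z / n + 1 / Real.sqrt (2 * α' * n)) :
    ∀ b : ℝ, 0 < b →
      (ℙ : Measure Ω)
          {ω | |Abar ω - gbar| >
            b * Real.log n / Real.sqrt (r * n) + h (N ω) n α}
        ≤ ENNReal.ofReal (1 / b ^ 2 + α) := by
  intro b hb
  classical
  obtain ⟨M, rfl⟩ : ∃ M, m = M + 1 := ⟨m - 1, (Nat.succ_pred_eq_of_pos hm).symm⟩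
  have hn1 : 1 ≤ n := by omega
  have hnR1 : (1:ℝ) < n := by exact_mod_cast (by omega : 1 < n)
  have hn0R : (0:ℝ) < n := by linarith
  have hτ0 : (0:ℝ) < τhat := lt_of_lt_of_le one_pos hτhat
  have hr0 : 0 < r := by
    rw [hr]
    apply lt_min
    · exact_mod_cast (by omega : 0 < n)
    · exact div_pos (by exact_mod_cast Nat.succ_pos M) hτ0
  have hlog : 0 < Real.log n := Real.log_pos hnR1
  have hsr : 0 < Real.sqrt r := Real.sqrt_pos.2 hr0
  have hsn : 0 < Real.sqrt n := Real.sqrt_pos.2 hn0R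
  set L : ℝ := Real.log n / Real.sqrt r with hLdef
  have hL : 0 < L := div_pos hlog hsr
  -- canonical path space
  set ext : (Fin (M+1) → S) → ℕ → S :=
    fun v j => if hj : j < M+1 then v ⟨j, hj⟩ else v 0 with hext
  set q : (Fin (M+1) → S) → ℝ :=
    fun v => π (ext v 0) * ∏ j ∈ range (M + 1 - 1), K (ext v j) (ext v (j + 1)) with hq
  set a : (Fin (M+1) → S) → ℝ :=
    fun v => (∑ j ∈ range (M+1), g (ext v j)) / ((M+1 : ℕ) : ℝ) with ha
  have hext_lt : ∀ (v : Fin (M+1) → S) (j : ℕ) (hj : j < M+1), ext v j = v ⟨j, hj⟩ := by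
    intro v j hj
    simp only [hext]
    rw [dif_pos hj]
  -- Fin-indexed form of q
  have hqF : ∀ v : Fin (M+1) → S,
      q v = π (v 0) * ∏ j : Fin M, K (v j.castSucc) (v j.succ) := by
    intro v
    simp only [hq]
    have h0 : ext v 0 = v 0 := by
      rw [hext_lt v 0 (Nat.succ_pos M)]
      exact congrArg v (Fin.ext (by simp))
    rw [h0]
    congr 1
    rw [show M + 1 - 1 = M from rfl,
      ← Fin.prod_univ_eq_prod_range (fun j => K (ext v j) (ext v (j + 1))) M]
    refine Finset.prod_congr rfl fun j _ => ?_
    have e1 : ext v (j : ℕ) = v j.castSucc := by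
      rw [hext_lt v (j : ℕ) (lt_of_lt_of_le j.isLt (Nat.le_succ M))]
      exact congrArg v (Fin.ext (by simp))
    have e2 : ext v ((j : ℕ) + 1) = v j.succ := by
      rw [hext_lt v ((j : ℕ) + 1) (Nat.succ_lt_succ j.isLt)]
      exact congrArg v (Fin.ext (by simp))
    rw [e1, e2]
  have hq0 : ∀ v, 0 ≤ q v := by
    intro v
    simp only [hq]
    exact mul_nonneg (hπnonneg _) (Finset.prod_nonneg fun j _ => hKnonneg _ _)
  have hq1 : ∑ v, q v = 1 := by
    rw [Finset.sum_congr rfl fun v _ => hqF v, aux_chain_mass K hKrow M π, hπsum]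
  have hstat : ∀ t, ∑ s, π s * K s t = π t := by
    intro t
    calc ∑ s, π s * K s t = ∑ s, π t * K t s := Finset.sum_congr rfl fun s _ => hrev s t
      _ = π t * ∑ s, K t s := by rw [Finset.mul_sum]
      _ = π t := by rw [hKrow t, mul_one]
  have hmarg : ∀ (u : S → ℝ) (j : Fin (M+1)),
      ∑ v, q v * u (v j) = ∑ s, π s * u s := by
    intro u j
    rw [Finset.sum_congr rfl fun v _ => by rw [hqF v]]
    exact aux_chain_marg K π hKrow hstat u M j
  have hM1pos : (0:ℝ) < ((M+1 : ℕ) : ℝ) := by exact_mod_cast Nat.succ_pos M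
  have ha01 : ∀ v, a v ∈ Set.Icc (0:ℝ) 1 := by
    intro v
    constructor
    · exact div_nonneg (Finset.sum_nonneg fun j _ => (hg _).1) hM1pos.le
    · rw [div_le_one hM1pos]
      calc ∑ j ∈ range (M+1), g (ext v j) ≤ ∑ j ∈ range (M+1), 1 :=
            Finset.sum_le_sum fun j _ => (hg _).2
        _ = ((M+1 : ℕ) : ℝ) := by simp
  have hEa : ∑ v, q v * a v = gbar := by
    have hterm : ∀ v ∈ (univ : Finset (Fin (M+1) → S)),
        q v * a v = (∑ j ∈ range (M+1), q v * g (ext v j)) / ((M+1 : ℕ) : ℝ) := by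
      intro v _
      simp only [ha]
      rw [← Finset.mul_sum]
      ring
    rw [Finset.sum_congr rfl hterm, ← Finset.sum_div, Finset.sum_comm]
    have hj : ∀ j ∈ range (M+1), ∑ v, q v * g (ext v j) = gbar := by
      intro j hjm
      rw [Finset.mem_range] at hjm
      have hre : ∀ v ∈ (univ : Finset (Fin (M+1) → S)),
          q v * g (ext v j) = q v * g (v ⟨j, hjm⟩) := by
        intro v _
        rw [hext_lt v j hjm]
      rw [Finset.sum_congr rfl hre, hmarg (fun s => g s) ⟨j, hjm⟩, hgbar]
    rw [Finset.sum_congr rfl hj, Finset.sum_const, Finset.card_range, nsmul_eq_mul]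
    field_simp
  -- the canonical event
  set cA : (Fin n → Fin (M+1) → S) → ℝ := fun cs => (∑ i, a (cs i)) / n with hcA
  have hcA01 : ∀ cs, cA cs ∈ Set.Icc (0:ℝ) 1 := by
    intro cs
    simp only [hcA]
    constructor
    · exact div_nonneg (Finset.sum_nonneg fun i _ => (ha01 _).1) hn0R.le
    · rw [div_le_one hn0R]
      calc ∑ i, a (cs i) ≤ ∑ i : Fin n, 1 := Finset.sum_le_sum fun i _ => (ha01 _).2
        _ = (n : ℝ) := by simp
  set HH : ℕ → ℝ := fun z => h z n α with hHH
  have hHHval : ∀ z : ℕ, HH z = if z = 0 then Real.log (2 / α) / n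
      else z / n + 1 / Real.sqrt (2 * α * n) := fun z => hh z α
  set PE : ((Fin n → Fin (M+1) → S) × (Fin n → Fin (M+1) → S)) → Prop := fun cc =>
    b * L / Real.sqrt n
        + HH ((univ.filter fun i => ¬ |a (cc.2 i) - cA cc.1| ≤ L).card)
      < |(∑ i, (if |a (cc.2 i) - cA cc.1| ≤ L then a (cc.2 i) else cA cc.1)) / n - gbar|
    with hPE
  set Φ : Ω → ((Fin n → Fin (M+1) → S) × (Fin n → Fin (M+1) → S)) :=
    fun ω => (fun i j => Xs i (j : ℕ) ω, fun i j => X i (j : ℕ) ω) with hΦ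
  -- pointwise identifications
  have hXa : ∀ i ω, A i ω = a ((Φ ω).2 i) := by
    intro i ω
    rw [hA]
    simp only [hΦ, ha]
    congr 1
    refine Finset.sum_congr rfl fun j hj => ?_
    rw [Finset.mem_range] at hj
    simp only [hext]
    rw [dif_pos hj]
  have hXsa : ∀ i ω, As i ω = a ((Φ ω).1 i) := by
    intro i ω
    rw [hAs]
    simp only [hΦ, ha]
    congr 1
    refine Finset.sum_congr rfl fun j hj => ?_
    rw [Finset.mem_range] at hj
    simp only [hext]
    rw [dif_pos hj]
  have hgstarC : ∀ ω, gstar ω = cA ((Φ ω).1) := by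
    intro ω
    rw [hgstar]
    simp only [hcA]
    congr 1
    exact Finset.sum_congr rfl fun i _ => hXsa i ω
  have hAtC : ∀ i ω, At i ω =
      if |a ((Φ ω).2 i) - cA ((Φ ω).1)| ≤ L then a ((Φ ω).2 i) else cA ((Φ ω).1) := by
    intro i ω
    rw [hAt, hXa i ω, hgstarC ω]
  have hAbarC : ∀ ω, Abar ω =
      (∑ i, (if |a ((Φ ω).2 i) - cA ((Φ ω).1)| ≤ L then a ((Φ ω).2 i) else cA ((Φ ω).1)))
        / n := by
    intro ω
    rw [hAbar]
    congr 1
    exact Finset.sum_congr rfl fun i _ => hAtC i ω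
  have hNC : ∀ ω, N ω =
      (univ.filter fun i => ¬ |a ((Φ ω).2 i) - cA ((Φ ω).1)| ≤ L).card := by
    intro ω
    rw [hN]
    congr 1
    refine Finset.filter_congr fun i _ => ?_
    constructor
    · intro hne
      intro hle
      apply hne
      rw [hAtC i ω, hXa i ω, if_pos hle]
    · intro hnle
      rw [hAtC i ω, hXa i ω, if_neg hnle]
      intro heq
      apply hnle
      rw [heq]
      simpa using hL.le
  have hthr : b * Real.log n / Real.sqrt (r * n) = b * L / Real.sqrt n := by
    rw [Real.sqrt_mul hr0.le, hLdef]
    field_simp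
    try ring
  -- event as preimage union
  set badF : Finset ((Fin n → Fin (M+1) → S) × (Fin n → Fin (M+1) → S)) :=
    univ.filter PE with hbadF
  have hevent : {ω | |Abar ω - gbar| >
        b * Real.log n / Real.sqrt (r * n) + h (N ω) n α}
      = ⋃ cc ∈ badF, Φ ⁻¹' {cc} := by
    ext ω
    simp only [Set.mem_setOf_eq, Set.mem_iUnion, Set.mem_preimage,
      Set.mem_singleton_iff, hbadF, Finset.mem_filter, Finset.mem_univ, true_and]
    have hiff : (|Abar ω - gbar| >
        b * Real.log n / Real.sqrt (r * n) + h (N ω) n α) ↔ PE (Φ ω) := by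
      rw [hthr, hAbarC ω, hNC ω]
    constructor
    · intro hP
      exact ⟨Φ ω, hiff.1 hP, rfl⟩
    · rintro ⟨cc, hcc, hccω⟩
      rw [hiff]
      rw [hccω]
      exact hcc
  -- probability of a single configuration
  have hsingle : ∀ cc : ((Fin n → Fin (M+1) → S) × (Fin n → Fin (M+1) → S)),
      (ℙ : Measure Ω) (Φ ⁻¹' {cc})
        = ENNReal.ofReal ((∏ i, q (cc.1 i)) * ∏ i, q (cc.2 i)) := by
    rintro ⟨cs, cx⟩
    set cyl : (Fin n ⊕ Fin n) → Set (ℕ → S) := fun k =>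
      {u | ∀ j < M+1, u j = ext (Sum.elim cs cx k) j} with hcyl
    have hmeas : ∀ k ∈ (univ : Finset (Fin n ⊕ Fin n)), MeasurableSet (cyl k) := by
      intro k _
      have hrepr : cyl k = ⋂ (j : ℕ), ⋂ (_ : j < M+1),
          (fun u : ℕ → S => u j) ⁻¹' {ext (Sum.elim cs cx k) j} := by
        ext u
        simp [hcyl]
      rw [hrepr]
      exact MeasurableSet.iInter fun j => MeasurableSet.iInter fun _ =>
        measurable_pi_apply j (MeasurableSet.of_discrete)
    have hbridge : ∀ (Y : ℕ → Ω → S) (c : Fin (M+1) → S) (ω : Ω),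
        ((fun j : Fin (M+1) => Y (j : ℕ) ω) = c) ↔ (∀ j < M+1, Y j ω = ext c j) := by
      intro Y c ω
      rw [funext_iff]
      constructor
      · intro hf j hj
        rw [hext_lt c j hj]
        exact hf ⟨j, hj⟩
      · intro hf j
        have := hf (j : ℕ) j.isLt
        rw [hext_lt c (j : ℕ) j.isLt] at this
        simpa [Fin.eta] using this
    have hpre : Φ ⁻¹' {(cs, cx)} = ⋂ k ∈ (univ : Finset (Fin n ⊕ Fin n)),
        (fun ω => Sum.elim (fun i j => Xs i j ω) (fun i j => X i j ω) k) ⁻¹' cyl k := by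
      ext ω
      simp only [Set.mem_preimage, Set.mem_singleton_iff, Set.mem_iInter, hΦ,
        Prod.mk.injEq, funext_iff (f := fun i : Fin n => _)]
      constructor
      · rintro ⟨h1, h2⟩ k _
        cases k with
        | inl i =>
          intro j hj
          exact ((hbridge (Xs i) (cs i) ω).1 (h1 i)) j hj
        | inr i =>
          intro j hj
          exact ((hbridge (X i) (cx i) ω).1 (h2 i)) j hj
      · intro hk
        constructor
        · intro i
          exact (hbridge (Xs i) (cs i) ω).2 (hk (Sum.inl i) (Finset.mem_univ _))
        · intro i
          exact (hbridge (X i) (cx i) ω).2 (hk (Sum.inr i) (Finset.mem_univ _))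
    rw [hpre,
      (ProbabilityTheory.iIndepFun_iff_measure_inter_preimage_eq_mul.1 hindep) univ hmeas,
      Fintype.prod_sum_type]
    have hfac1 : ∀ i : Fin n,
        (ℙ : Measure Ω) ((fun ω => Sum.elim (fun i j => Xs i j ω)
            (fun i j => X i j ω) (Sum.inl i)) ⁻¹' cyl (Sum.inl i))
          = ENNReal.ofReal (q (cs i)) := by
      intro i
      have hs : ((fun ω => Sum.elim (fun i j => Xs i j ω)
            (fun i j => X i j ω) (Sum.inl i)) ⁻¹' cyl (Sum.inl i))
          = {ω | ∀ j < M+1, Xs i j ω = ext (cs i) j} := rfl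
      rw [hs, hchain_s i (ext (cs i))]
    have hfac2 : ∀ i : Fin n,
        (ℙ : Measure Ω) ((fun ω => Sum.elim (fun i j => Xs i j ω)
            (fun i j => X i j ω) (Sum.inr i)) ⁻¹' cyl (Sum.inr i))
          = ENNReal.ofReal (q (cx i)) := by
      intro i
      have hs : ((fun ω => Sum.elim (fun i j => Xs i j ω)
            (fun i j => X i j ω) (Sum.inr i)) ⁻¹' cyl (Sum.inr i))
          = {ω | ∀ j < M+1, X i j ω = ext (cx i) j} := rfl
      rw [hs, hchain i (ext (cx i))]
    rw [Finset.prod_congr rfl fun i _ => hfac1 i,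
      Finset.prod_congr rfl fun i _ => hfac2 i,
      ← ENNReal.ofReal_prod_of_nonneg (fun i _ => hq0 (cs i)),
      ← ENNReal.ofReal_prod_of_nonneg (fun i _ => hq0 (cx i)),
      ← ENNReal.ofReal_mul (Finset.prod_nonneg fun i _ => hq0 (cs i))]
  -- the real inequality
  have hreal : ∑ cc ∈ badF, (∏ i, q (cc.1 i)) * ∏ i, q (cc.2 i) ≤ 1 / b ^ 2 + α := by
    rw [hbadF, Finset.sum_filter, Fintype.sum_prod_type]
    have hsplit : ∀ (P : Prop) [Decidable P] (x y : ℝ),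
        (if P then x * y else 0) = x * (y * if P then (1:ℝ) else 0) := by
      intro P _ x y
      split <;> ring
    have hstep : ∀ cs : Fin n → Fin (M+1) → S,
        (∑ cx : Fin n → Fin (M+1) → S,
          if PE (cs, cx) then (∏ i, q (cs i)) * ∏ i, q (cx i) else 0)
        ≤ (∏ i, q (cs i)) * (1 / b ^ 2 + α) := by
      intro cs
      have hrw : ∀ cx ∈ (univ : Finset (Fin n → Fin (M+1) → S)),
          (if PE (cs, cx) then (∏ i, q (cs i)) * ∏ i, q (cx i) else 0)
          = (∏ i, q (cs i)) * ((∏ i, q (cx i)) * if PE (cs, cx) then (1:ℝ) else 0) :=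
        fun cx _ => hsplit _ _ _
      rw [Finset.sum_congr rfl hrw, ← Finset.mul_sum]
      refine mul_le_mul_of_nonneg_left ?_ (Finset.prod_nonneg fun i _ => hq0 _)
      have hcore := aux_core q hq0 hq1 a ha01 gbar hEa n hn1 L (cA cs) hL (hcA01 cs)
        b α hb hα0 hα1 HH hHHval
      refine le_trans (le_of_eq ?_) hcore
      refine Finset.sum_congr rfl fun cx _ => ?_
      congr 1
    calc ∑ cs : Fin n → Fin (M+1) → S, ∑ cx : Fin n → Fin (M+1) → S,
          (if PE (cs, cx) then (∏ i, q (cs i)) * ∏ i, q (cx i) else 0)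
        ≤ ∑ cs : Fin n → Fin (M+1) → S, (∏ i, q (cs i)) * (1 / b ^ 2 + α) :=
          Finset.sum_le_sum fun cs _ => hstep cs
      _ = (∑ cs : Fin n → Fin (M+1) → S, ∏ i, q (cs i)) * (1 / b ^ 2 + α) := by
          rw [Finset.sum_mul]
      _ = 1 / b ^ 2 + α := by
          rw [aux_sum_prod q n, hq1, one_pow, one_mul]
  -- assemble
  calc (ℙ : Measure Ω) {ω | |Abar ω - gbar| >
        b * Real.log n / Real.sqrt (r * n) + h (N ω) n α}
      = (ℙ : Measure Ω) (⋃ cc ∈ badF, Φ ⁻¹' {cc}) := by rw [hevent]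
    _ ≤ ∑ cc ∈ badF, (ℙ : Measure Ω) (Φ ⁻¹' {cc}) :=
        measure_biUnion_finset_le badF _
    _ = ∑ cc ∈ badF, ENNReal.ofReal ((∏ i, q (cc.1 i)) * ∏ i, q (cc.2 i)) :=
        Finset.sum_congr rfl fun cc _ => hsingle cc
    _ = ENNReal.ofReal (∑ cc ∈ badF, (∏ i, q (cc.1 i)) * ∏ i, q (cc.2 i)) :=
        (ENNReal.ofReal_sum_of_nonneg fun cc _ =>
          mul_nonneg (Finset.prod_nonneg fun i _ => hq0 _)
            (Finset.prod_nonneg fun i _ => hq0 _)).symm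
    _ ≤ ENNReal.ofReal (1 / b ^ 2 + α) := ENNReal.ofReal_le_ofReal hreal
end

section
/- Let p ∈ [0,1] and, conditionally on a random variable ḡ*, let N ~ Binomial(n, p(ḡ*)) where p(ḡ*) ∈ [0,1] is measurable. With h as in the paper (h(z,n;α) = z/n + 1/√(2αn) for z ≠ 0, h(0,n;α) = log(2/α)/n), one has P(p(ḡ*) > h(N, n; α)) ≤ α for 0 < α < 1 and n ≥ 3. -/
/-!
Fix the value `x = p(ḡ*)` of the success probability; it suffices to bound the conditional
probability by `α`, then integrate over `ḡ*`. The event splits according to `N = 0` or not.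
If `N = 0` its probability is `(1 - x)^n ≤ exp(-n x) < α / 2` as soon as `x > log(2/α)/n`.
If `N ≠ 0` the event forces `n x - N > √(n / (2α))`, so Chebyshev's inequality with the
binomial variance `n x (1 - x) ≤ n / 4` bounds its probability by `α / 2`.
-/

open MeasureTheory ProbabilityTheory Finset

noncomputable def binomialWeight (n : ℕ) (x : ℝ) (k : ℕ) : ℝ :=
  n.choose k * x ^ k * (1 - x) ^ (n - k)

lemma binomialWeight_nonneg {x : ℝ} (hx : x ∈ Set.Icc (0 : ℝ) 1) (n k : ℕ) :
    0 ≤ binomialWeight n x k := by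
  have : 0 ≤ 1 - x := sub_nonneg.2 hx.2
  have := hx.1
  unfold binomialWeight
  positivity

lemma binomialWeight_eq_zero_of_lt {n k : ℕ} (h : n < k) (x : ℝ) :
    binomialWeight n x k = 0 := by
  simp [binomialWeight, Nat.choose_eq_zero_of_lt h]

lemma sum_sq_sub_mul_binomialWeight (n : ℕ) (x : ℝ) :
    ∑ k ∈ range (n + 1), (n * x - k) ^ 2 * binomialWeight n x k = n * x * (1 - x) := by
  simpa [binomialWeight, bernsteinPolynomial, Polynomial.eval_finsetSum]
    using congrArg (Polynomial.eval x) (bernsteinPolynomial.variance ℝ n)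

lemma sum_binomialWeight_le_of_le_abs {n : ℕ} {x t : ℝ} (hx : x ∈ Set.Icc (0 : ℝ) 1)
    (ht : 0 < t) {S : Finset ℕ} (hS : S ⊆ range (n + 1))
    (hfar : ∀ k ∈ S, t ≤ |n * x - k|) :
    ∑ k ∈ S, binomialWeight n x k ≤ n * x * (1 - x) / t ^ 2 := by
  have hw := binomialWeight_nonneg hx n
  calc ∑ k ∈ S, binomialWeight n x k
      ≤ ∑ k ∈ S, (n * x - k) ^ 2 / t ^ 2 * binomialWeight n x k := by
        refine sum_le_sum fun k hk => le_mul_of_one_le_left (hw k) ?_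
        rw [one_le_div (by positivity)]
        simpa only [sq_abs] using pow_le_pow_left₀ ht.le (hfar k hk) 2
    _ ≤ ∑ k ∈ range (n + 1), (n * x - k) ^ 2 / t ^ 2 * binomialWeight n x k :=
        sum_le_sum_of_subset_of_nonneg hS fun k _ _ => mul_nonneg (by positivity) (hw k)
    _ = n * x * (1 - x) / t ^ 2 := by
        simp_rw [div_mul_eq_mul_div, ← sum_div, sum_sq_sub_mul_binomialWeight]

lemma binomialWeight_zero_le {n : ℕ} (hn : n ≠ 0) {α x : ℝ} (hα : 0 < α) (hx1 : x ≤ 1)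
    (hx : Real.log (2 / α) / n < x) : binomialWeight n x 0 ≤ α / 2 := by
  have hn' : (0 : ℝ) < n := by positivity
  calc binomialWeight n x 0 = (1 - x) ^ n := by simp [binomialWeight]
    _ ≤ Real.exp (-x) ^ n := pow_le_pow_left₀ (by linarith) (Real.one_sub_le_exp_neg x) n
    _ = Real.exp (-(n * x)) := by rw [← Real.exp_nat_mul]; ring_nf
    _ ≤ Real.exp (-Real.log (2 / α)) := by
        gcongr
        rw [div_lt_iff₀ hn'] at hx
        linarith
    _ = α / 2 := by rw [Real.exp_neg, Real.exp_log (by positivity), inv_div]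

noncomputable def binomialUpperBound (n : ℕ) (α : ℝ) (z : ℕ) : ℝ :=
  if z = 0 then Real.log (2 / α) / n else z / n + 1 / Real.sqrt (2 * α * n)

lemma sum_binomialWeight_filter_lt_binomialUpperBound_le {n : ℕ} (hn : n ≠ 0) {α x : ℝ}
    (hα : 0 < α) (hx : x ∈ Set.Icc (0 : ℝ) 1) :
    ∑ k ∈ (range (n + 1)).filter (fun k => binomialUpperBound n α k < x),
      binomialWeight n x k ≤ α := by
  set S := (range (n + 1)).filter (fun k => binomialUpperBound n α k < x)
  rw [← sum_filter_add_sum_filter_not S (· = 0)]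
  have hzero : ∑ k ∈ S.filter (· = 0), binomialWeight n x k ≤ α / 2 := by
    rw [filter_eq' S 0]
    split_ifs with h0
    · have h0' : Real.log (2 / α) / n < x := by simpa [S, binomialUpperBound] using h0
      rw [sum_singleton]
      exact binomialWeight_zero_le hn hα hx.2 h0'
    · rw [sum_empty]
      positivity
  have hpos : ∑ k ∈ S.filter (· ≠ 0), binomialWeight n x k ≤ α / 2 := by
    have hn' : (0 : ℝ) < n := by positivity
    set t : ℝ := n / Real.sqrt (2 * α * n)
    have ht2 : t ^ 2 = n / (2 * α) := by
      rw [div_pow, Real.sq_sqrt (by positivity)]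
      field_simp
    have hfar : ∀ k ∈ S.filter (· ≠ 0), t ≤ |n * x - k| := by
      intro k hk
      rw [mem_filter, mem_filter] at hk
      obtain ⟨⟨-, hk⟩, hk0⟩ := hk
      rw [binomialUpperBound, if_neg hk0] at hk
      have : (k + t : ℝ) < n * x := by
        have := mul_lt_mul_of_pos_left hk hn'
        rwa [mul_add, mul_div_cancel₀ _ hn'.ne', mul_one_div] at this
      exact (by linarith : t ≤ n * x - k).trans (le_abs_self _)
    calc ∑ k ∈ S.filter (· ≠ 0), binomialWeight n x k ≤ n * x * (1 - x) / t ^ 2 :=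
          sum_binomialWeight_le_of_le_abs hx (by positivity)
            ((filter_subset _ S).trans (filter_subset _ _)) hfar
      _ = 2 * α * (x * (1 - x)) := by rw [ht2]; field_simp
      _ ≤ α / 2 := by nlinarith [sq_nonneg (x - 1 / 2)]
  linarith

lemma measure_eq_ofReal_sum_binomialWeight {n : ℕ} {x : ℝ} (hx : x ∈ Set.Icc (0 : ℝ) 1)
    {μ : Measure ℕ} (hμ : ∀ k, μ {k} = ENNReal.ofReal (binomialWeight n x k))
    (A : Set ℕ) [DecidablePred (· ∈ A)] :
    μ A = ENNReal.ofReal (∑ k ∈ (range (n + 1)).filter (· ∈ A), binomialWeight n x k) := by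
  have hnull : μ (↑(range (n + 1)))ᶜ = 0 := by
    rw [← Set.biUnion_of_singleton ((range (n + 1) : Set ℕ)ᶜ),
      measure_biUnion_null_iff (Set.to_countable _)]
    intro k hk
    rw [hμ, binomialWeight_eq_zero_of_lt (by simpa using hk), ENNReal.ofReal_zero]
  rw [← measure_inter_conull hnull, ENNReal.ofReal_sum_of_nonneg fun k _ =>
    binomialWeight_nonneg hx n k, ← sum_congr rfl fun k _ => hμ k, sum_measure_singleton,
    coe_filter]
  congr 1
  ext k
  simp [and_comm]

lemma measure_setOf_binomialUpperBound_lt_le {n : ℕ} (hn : n ≠ 0) {α x : ℝ} (hα : 0 < α)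
    (hx : x ∈ Set.Icc (0 : ℝ) 1) {μ : Measure ℕ}
    (hμ : ∀ k, μ {k} = ENNReal.ofReal (binomialWeight n x k)) :
    μ {k | binomialUpperBound n α k < x} ≤ ENNReal.ofReal α := by
  rw [measure_eq_ofReal_sum_binomialWeight hx hμ]
  exact ENNReal.ofReal_le_ofReal (sum_binomialWeight_filter_lt_binomialUpperBound_le hn hα hx)

theorem conditional_binomial_estimate_general
    (n : ℕ) (hn : 3 ≤ n) (α : ℝ) (hα0 : 0 < α)
    (p : ℝ → ℝ) (hp : Measurable p) (hp01 : ∀ g, p g ∈ Set.Icc (0 : ℝ) 1)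
    (ν : Measure ℝ) [IsProbabilityMeasure ν]
    (κ : ProbabilityTheory.Kernel ℝ ℕ) [ProbabilityTheory.IsMarkovKernel κ]
    (hκ : ∀ᵐ g ∂ν, ∀ k : ℕ,
      κ g {k} = ENNReal.ofReal ((n.choose k : ℝ) * p g ^ k * (1 - p g) ^ (n - k)))
    (h : ℕ → ℕ → ℝ → ℝ)
    (hh : ∀ (z : ℕ) (α' : ℝ), h z n α' =
      if z = 0 then Real.log (2 / α') / n
      else z / n + 1 / Real.sqrt (2 * α' * n)) :
    (ν.compProd κ) {q | p q.1 > h q.2 n α} ≤ ENNReal.ofReal α := by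
  have hmeas : MeasurableSet {q : ℝ × ℕ | p q.1 > h q.2 n α} :=
    measurableSet_lt ((measurable_of_countable fun k => h k n α).comp measurable_snd)
      (hp.comp measurable_fst)
  rw [Measure.compProd_apply hmeas]
  calc ∫⁻ g, κ g (Prod.mk g ⁻¹' {q | p q.1 > h q.2 n α}) ∂ν
      ≤ ∫⁻ _, ENNReal.ofReal α ∂ν := by
        refine lintegral_mono_ae ?_
        filter_upwards [hκ] with g hg
        have hslice : Prod.mk g ⁻¹' {q | p q.1 > h q.2 n α} =
            {k | binomialUpperBound n α k < p g} := by
          ext k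
          simp [hh, binomialUpperBound]
        rw [hslice]
        exact measure_setOf_binomialUpperBound_lt_le (by omega) hα0 (hp01 g) hg
    _ = ENNReal.ofReal α := by simp

/-- Conditionally on `ḡ*` (with distribution `ν` on `ℝ`), let `N` be
`Binomial(n, p(ḡ*))` (the kernel `κ` gives its conditional law). With
`h(z,n;α) = z/n + 1/√(2αn)` for `z ≠ 0` and `h(0,n;α) = log(2/α)/n`, one has
`P(p(ḡ*) > h(N,n;α)) ≤ α`. -/
theorem conditional_binomial_estimate
    (n : ℕ) (hn : 3 ≤ n) (α : ℝ) (hα0 : 0 < α) (hα1 : α < 1)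
    (p : ℝ → ℝ) (hp : Measurable p) (hp01 : ∀ g, p g ∈ Set.Icc (0 : ℝ) 1)
    (ν : Measure ℝ) [IsProbabilityMeasure ν]
    (κ : ProbabilityTheory.Kernel ℝ ℕ) [ProbabilityTheory.IsMarkovKernel κ]
    (hκ : ∀ᵐ g ∂ν, ∀ k : ℕ,
      κ g {k} = ENNReal.ofReal ((n.choose k : ℝ) * p g ^ k * (1 - p g) ^ (n - k)))
    (h : ℕ → ℕ → ℝ → ℝ)
    (hh : ∀ (z : ℕ) (α' : ℝ), h z n α' =
      if z = 0 then Real.log (2 / α') / n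
      else z / n + 1 / Real.sqrt (2 * α' * n)) :
    (ν.compProd κ) {q | p q.1 > h q.2 n α} ≤ ENNReal.ofReal α :=
  conditional_binomial_estimate_general n hn α hα0 p hp hp01 ν κ hκ h hh
end
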